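/- arXiv:1807.09238 — 2 statements merged into one kernel-verified Lean document; each statement's English description precedes it below -/
import Mathlib

section
/- For every t > 0, every β > 0, and every ξ ∈ ℝ, the series of integrals ∑_{j≥0} ∫_0^∞ sin(xξ) L_j^{(−1)}(2tx) e^{−(2j+β)x} dx converges and equals the double series ∑_{m≥0} ∑_{j≥0} (m)_j (−2t)^m / ( j! ((2j+2m+β)² + ξ²)^{(m+1)/2} ) · sin( (m+1) arctan( ξ/(2j+2m+β) ) ), which converges absolutely. -/
/-!
Expanding `L_j^{(-1)}` into monomials reduces the `j`-th integral, with `s = 2j + β`, to the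
Laplace moments `∫₀^∞ x^m sin(xξ) e^{-sx} dx = Im (m! / (s - iξ)^{m+1})`. Writing
`s - iξ = √(s² + ξ²) e^{-iθ}` with `θ = arctan (ξ/s)`, these are
`m! sin((m+1) θ) / (s² + ξ²)^{(m+1)/2}`, and the `j`-th integral becomes the antidiagonal sum
`∑_{m+k=j} ITerm m k`. Since `(m)_k (m-1)! ≤ k! (m+k-1)^{m-1}` and `2m + 2k + β ≥ 2(m+k)`,
`|ITerm m k|` is dominated by `|t|^m / (m-1)! · (k+1)^{-2}` for `m ≥ 1` (and `ITerm 0 k = 0` for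
`k ≥ 1`), so the double series converges absolutely and may be summed either along
antidiagonals or row by row.
-/

open Real MeasureTheory Polynomial

/-- Pochhammer symbol `(a)_k = a (a+1) ⋯ (a+k-1)`. -/
noncomputable def poch (a : ℝ) (k : ℕ) : ℝ := (ascPochhammer ℝ k).eval a

/-- Laguerre polynomial of index `-1`:
`L_j^{(-1)}(y) = (1/j!) ∑_{m=0}^j (-1)^m (j choose m) (m)_{j-m} y^m`. -/
noncomputable def laguerre (j : ℕ) (y : ℝ) : ℝ :=
  (1 / (j.factorial : ℝ)) *
    ∑ m ∈ Finset.range (j + 1), (-1 : ℝ) ^ m * (j.choose m : ℝ) * poch m (j - m) * y ^ m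

/-- General term of the double series, with parameter `β > 0`. -/
noncomputable def ITerm (t β ξ : ℝ) (m j : ℕ) : ℝ :=
  poch m j * (-2 * t) ^ m /
      ((j.factorial : ℝ) *
        (((2 * (j : ℝ) + 2 * (m : ℝ) + β) ^ 2 + ξ ^ 2) ^ (((m : ℝ) + 1) / 2))) *
    Real.sin (((m : ℝ) + 1) * Real.arctan (ξ / (2 * (j : ℝ) + 2 * (m : ℝ) + β)))

open Filter Topology Set Nat
open Complex (I)
open scoped Complex
open Finset.HasAntidiagonal (antidiagonal)

lemma integrableOn_pow_mul_exp_neg_mul (n : ℕ) {s : ℝ} (hs : 0 < s) :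
    IntegrableOn (fun x : ℝ => x ^ n * rexp (-s * x)) (Ioi 0) := by
  refine (integrableOn_rpow_mul_exp_neg_mul_rpow (s := n) (neg_one_lt_zero.trans_le n.cast_nonneg)
    one_pos hs).congr_fun (fun x _ => ?_) measurableSet_Ioi
  simp

lemma norm_pow_mul_cexp_neg_mul {x : ℝ} (hx : 0 ≤ x) (n : ℕ) (z : ℂ) :
    ‖(x : ℂ) ^ n * cexp (-z * x)‖ = x ^ n * rexp (-z.re * x) := by
  simp [Complex.norm_exp, abs_of_nonneg hx]

lemma integrableOn_pow_mul_cexp_neg_mul (n : ℕ) {z : ℂ} (hz : 0 < z.re) :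
    IntegrableOn (fun x : ℝ => (x : ℂ) ^ n * cexp (-z * x)) (Ioi 0) := by
  refine (integrableOn_pow_mul_exp_neg_mul n hz).mono' (by fun_prop) ?_
  filter_upwards [ae_restrict_mem measurableSet_Ioi] with x hx
  exact (norm_pow_mul_cexp_neg_mul hx.le n z).le

lemma tendsto_pow_mul_cexp_neg_mul_atTop_nhds_zero (n : ℕ) {z : ℂ} (hz : 0 < z.re) :
    Tendsto (fun x : ℝ => (x : ℂ) ^ n * cexp (-z * x)) atTop (𝓝 0) := by
  have h_real : Tendsto (fun x : ℝ => x ^ n * rexp (-z.re * x)) atTop (𝓝 0) := by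
    simpa using tendsto_rpow_mul_exp_neg_mul_atTop_nhds_zero n _ hz
  rw [tendsto_zero_iff_norm_tendsto_zero]
  refine h_real.congr' ?_
  filter_upwards [eventually_ge_atTop 0] with x hx
  exact (norm_pow_mul_cexp_neg_mul hx n z).symm

lemma integral_pow_mul_cexp_neg_mul {z : ℂ} (hz : 0 < z.re) (n : ℕ) :
    ∫ x in Ioi (0 : ℝ), (x : ℂ) ^ n * cexp (-z * x) = (n ! : ℂ) / z ^ (n + 1) := by
  have hz0 : z ≠ 0 := fun h => by simp [h] at hz
  induction n with
  | zero =>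
    simpa [div_neg, neg_div] using integral_exp_mul_complex_Ioi (a := -z) (by simpa) 0
  | succ n ih =>
    have hu : ∀ x ∈ Ioi (0 : ℝ), HasDerivAt (fun x : ℝ => (x : ℂ) ^ (n + 1))
        ((n + 1 : ℂ) * (x : ℂ) ^ n) x := fun x _ => by
      simpa using (hasDerivAt_pow (n + 1) (x : ℂ)).comp_ofReal
    have hv : ∀ x ∈ Ioi (0 : ℝ), HasDerivAt (fun x : ℝ => -z⁻¹ * cexp (-z * x))
        (cexp (-z * x)) x := fun x _ => by
      have := (((hasDerivAt_id (x : ℂ)).const_mul (-z)).cexp.const_mul (-z⁻¹)).comp_ofReal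
      simp only [id_eq, mul_one] at this
      convert this using 1
      field_simp
    have hu'v : IntegrableOn
        (fun x : ℝ => (n + 1 : ℂ) * (x : ℂ) ^ n * (-z⁻¹ * cexp (-z * x))) (Ioi 0) :=
      IntegrableOn.congr_fun
        ((integrableOn_pow_mul_cexp_neg_mul n hz).const_mul (-(n + 1) * z⁻¹))
        (fun x _ => by ring) measurableSet_Ioi
    have h_zero : Tendsto (fun x : ℝ => (x : ℂ) ^ (n + 1) * (-z⁻¹ * cexp (-z * x)))
        (𝓝[>] 0) (𝓝 0) := by
      have : ContinuousAt (fun x : ℝ => (x : ℂ) ^ (n + 1) * (-z⁻¹ * cexp (-z * x))) 0 := by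
        fun_prop
      simpa using this.tendsto.mono_left nhdsWithin_le_nhds
    have h_infty : Tendsto (fun x : ℝ => (x : ℂ) ^ (n + 1) * (-z⁻¹ * cexp (-z * x)))
        atTop (𝓝 0) := by
      simpa [mul_left_comm] using
        (tendsto_pow_mul_cexp_neg_mul_atTop_nhds_zero (n + 1) hz).const_mul (-z⁻¹)
    have key := integral_Ioi_mul_deriv_eq_deriv_mul hu hv
      (integrableOn_pow_mul_cexp_neg_mul (n + 1) hz) hu'v h_zero h_infty
    have hrhs : ∫ x in Ioi (0 : ℝ), (n + 1 : ℂ) * (x : ℂ) ^ n * (-z⁻¹ * cexp (-z * x))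
        = -(n + 1) * z⁻¹ * ∫ x in Ioi (0 : ℝ), (x : ℂ) ^ n * cexp (-z * x) := by
      rw [← integral_const_mul]
      congr 1 with x
      ring
    rw [key, hrhs, ih, factorial_succ]
    push_cast
    field_simp
    ring

lemma ofReal_sub_mul_I_eq_polar {s : ℝ} (hs : 0 < s) (ξ : ℝ) :
    (s : ℂ) - ξ * I = (√(s ^ 2 + ξ ^ 2) : ℝ) * cexp ((-arctan (ξ / s) : ℝ) * I) := by
  have hsqrt : √(1 + (ξ / s) ^ 2) = √(s ^ 2 + ξ ^ 2) / s := by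
    rw [eq_div_iff hs.ne', ← sqrt_sq hs.le, ← sqrt_mul (by positivity), sqrt_sq hs.le]
    congr 1
    field_simp
  apply Complex.ext <;>
    simp only [Complex.sub_re, Complex.sub_im, Complex.ofReal_re, Complex.ofReal_im,
      Complex.mul_re, Complex.mul_im, Complex.I_re, Complex.I_im, Complex.exp_ofReal_mul_I_re,
      Complex.exp_ofReal_mul_I_im, cos_neg, sin_neg, cos_arctan, sin_arctan, hsqrt] <;>
    field_simp <;> ring

lemma im_pow_mul_cexp_neg_mul (s ξ x : ℝ) (m : ℕ) :
    ((x : ℂ) ^ m * cexp (-(s - ξ * I) * x)).im = x ^ m * (sin (x * ξ) * rexp (-s * x)) := by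
  rw [← Complex.ofReal_pow, Complex.im_ofReal_mul, Complex.exp_im]
  congr 1
  simp [Complex.mul_re, Complex.mul_im, mul_comm]

lemma integrableOn_pow_mul_sin_mul_exp_neg_mul (m : ℕ) {s : ℝ} (hs : 0 < s) (ξ : ℝ) :
    IntegrableOn (fun x : ℝ => x ^ m * (sin (x * ξ) * rexp (-s * x))) (Ioi 0) := by
  have h := (integrableOn_pow_mul_cexp_neg_mul m (z := s - ξ * I) (by simpa using hs)).im
  simp only [RCLike.im_to_complex, im_pow_mul_cexp_neg_mul] at h
  exact h

lemma integral_pow_mul_sin_mul_exp_neg_mul {s : ℝ} (hs : 0 < s) (ξ : ℝ) (m : ℕ) :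
    ∫ x in Ioi (0 : ℝ), x ^ m * (sin (x * ξ) * rexp (-s * x))
      = m ! * sin ((m + 1) * arctan (ξ / s)) / (s ^ 2 + ξ ^ 2) ^ (((m : ℝ) + 1) / 2) := by
  set z : ℂ := s - ξ * I with hz_def
  have hz : 0 < z.re := by simpa [z] using hs
  have h_polar : (m ! : ℂ) / z ^ (m + 1)
      = ((m ! / √(s ^ 2 + ξ ^ 2) ^ (m + 1) : ℝ) : ℂ)
          * cexp (((m + 1) * arctan (ξ / s) : ℝ) * I) := by
    have h_exp : cexp ((m + 1 : ℕ) * (((-arctan (ξ / s) : ℝ) : ℂ) * I))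
        = (cexp (((m + 1) * arctan (ξ / s) : ℝ) * I))⁻¹ := by
      rw [← Complex.exp_neg]
      push_cast
      ring_nf
    rw [hz_def, ofReal_sub_mul_I_eq_polar hs ξ, mul_pow, ← Complex.exp_nat_mul, h_exp]
    push_cast
    field_simp
  calc ∫ x in Ioi (0 : ℝ), x ^ m * (sin (x * ξ) * rexp (-s * x))
      = (∫ x in Ioi (0 : ℝ), (x : ℂ) ^ m * cexp (-z * x)).im := by
        simp_rw [hz_def, ← im_pow_mul_cexp_neg_mul]
        exact integral_im (integrableOn_pow_mul_cexp_neg_mul m hz)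
    _ = m ! * sin ((m + 1) * arctan (ξ / s)) / (s ^ 2 + ξ ^ 2) ^ (((m : ℝ) + 1) / 2) := by
        rw [integral_pow_mul_cexp_neg_mul hz, h_polar, Complex.im_ofReal_mul,
          Complex.exp_ofReal_mul_I_im, rpow_div_two_eq_sqrt _ (by positivity),
          ← Nat.cast_add_one, rpow_natCast]
        ring

lemma poch_natCast (m k : ℕ) : poch m k = m.ascFactorial k := by
  rw [poch, ← ascPochhammer_eval_cast, ascPochhammer_nat_eq_ascFactorial]

lemma integral_sin_mul_laguerre_mul_exp_neg (t ξ : ℝ) {β : ℝ} (hβ : 0 < β) (j : ℕ) :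
    ∫ x in Ioi (0 : ℝ), sin (x * ξ) * laguerre j (2 * t * x) * rexp (-(2 * j + β) * x)
      = ∑ p ∈ antidiagonal j, ITerm t β ξ p.1 p.2 := by
  set s : ℝ := 2 * j + β
  have hs : 0 < s := by positivity
  have h_expand : ∀ x : ℝ, sin (x * ξ) * laguerre j (2 * t * x) * rexp (-s * x)
      = ∑ m ∈ Finset.range (j + 1), (-1) ^ m * j.choose m * poch m (j - m) * (2 * t) ^ m / j !
          * (x ^ m * (sin (x * ξ) * rexp (-s * x))) := fun x => by
    rw [laguerre, Finset.mul_sum, Finset.mul_sum, Finset.sum_mul]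
    refine Finset.sum_congr rfl fun m _ => ?_
    ring
  simp_rw [h_expand]
  rw [integral_finsetSum _ fun m _ =>
      (integrableOn_pow_mul_sin_mul_exp_neg_mul m hs ξ).const_mul _,
    Finset.Nat.sum_antidiagonal_eq_sum_range_succ (fun m k => ITerm t β ξ m k)]
  refine Finset.sum_congr rfl fun m hm => ?_
  have hmj : m ≤ j := Nat.lt_succ_iff.mp (Finset.mem_range.mp hm)
  have h_arg : 2 * ((j - m : ℕ) : ℝ) + 2 * m + β = s := by rw [Nat.cast_sub hmj]; ring
  rw [integral_const_mul, integral_pow_mul_sin_mul_exp_neg_mul hs ξ m, ITerm, h_arg,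
    Nat.cast_choose ℝ hmj, neg_mul, neg_pow (2 * t)]
  field_simp

lemma ascFactorial_succ_mul_factorial_le (n j : ℕ) :
    (n + 1).ascFactorial j * n ! ≤ j ! * (n + j) ^ n := by
  have h := factorial_mul_descFactorial (Nat.le_add_right n j)
  rw [Nat.add_sub_cancel_left] at h
  rw [mul_comm, factorial_mul_ascFactorial, ← h]
  exact Nat.mul_le_mul_left _ (descFactorial_le_pow _ _)

lemma pow_le_rpow_sq_add_sq {A : ℝ} (hA : 0 ≤ A) (ξ : ℝ) (n : ℕ) :
    A ^ n ≤ (A ^ 2 + ξ ^ 2) ^ ((n : ℝ) / 2) := by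
  rw [rpow_div_two_eq_sqrt _ (by positivity), rpow_natCast]
  exact pow_le_pow_left₀ hA (le_sqrt_of_sq_le (by nlinarith)) n

lemma abs_ITerm_le (t ξ : ℝ) {β : ℝ} (hβ : 0 < β) (m j : ℕ) :
    |ITerm t β ξ m j|
      ≤ m.ascFactorial j * (2 * |t|) ^ m / (j ! * (2 * j + 2 * m + β) ^ (m + 1)) := by
  set A : ℝ := 2 * j + 2 * m + β
  have hA : 0 < A := by positivity
  have hR := pow_le_rpow_sq_add_sq hA.le ξ (m + 1)
  push_cast at hR
  have hden : 0 < (j ! : ℝ) * (A ^ 2 + ξ ^ 2) ^ (((m : ℝ) + 1) / 2) := by positivity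
  rw [ITerm, abs_mul, abs_div, abs_of_pos hden, abs_mul, poch_natCast, Nat.abs_cast, abs_pow,
    abs_mul, abs_neg, abs_two]
  refine (mul_le_of_le_one_right (by positivity) (abs_sin_le_one _)).trans ?_
  gcongr

lemma abs_ITerm_le_majorant (t ξ : ℝ) {β : ℝ} (hβ : 0 < β) (m j : ℕ) :
    |ITerm t β ξ m j|
      ≤ (if m = 0 then β⁻¹ else |t| ^ m / (m - 1)!) * ((j + 1 : ℝ) ^ 2)⁻¹ := by
  refine (abs_ITerm_le t ξ hβ m j).trans ?_
  rcases m with _ | n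
  · rcases j with _ | k
    · simp
    · simp only [Nat.zero_ascFactorial, Nat.cast_zero, zero_mul, zero_div]
      positivity
  rw [if_neg n.succ_ne_zero, Nat.add_sub_cancel]
  set A : ℝ := 2 * j + 2 * (n + 1 : ℕ) + β
  have hA₁ : 2 * ((n : ℝ) + j) ≤ A := by
    simp only [A]
    push_cast
    linarith
  have hA₂ : 2 * ((j : ℝ) + 1) ^ 2 ≤ A ^ 2 := by
    have : 2 * ((j : ℝ) + 1) ≤ A := by
      simp only [A]
      push_cast
      linarith [(n.cast_nonneg : (0 : ℝ) ≤ n)]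
    nlinarith
  have hfac : ((n + 1).ascFactorial j : ℝ) * n ! ≤ j ! * ((n : ℝ) + j) ^ n := by
    exact_mod_cast ascFactorial_succ_mul_factorial_le n j
  rw [div_le_iff₀ (by positivity)]
  calc ((n + 1).ascFactorial j : ℝ) * (2 * |t|) ^ (n + 1)
      = ((n + 1).ascFactorial j * n !) * (2 ^ (n + 1) * |t| ^ (n + 1)) / n ! := by
        field_simp
        ring
    _ ≤ j ! * ((n : ℝ) + j) ^ n * (2 ^ (n + 1) * |t| ^ (n + 1)) / n ! := by gcongr
    _ = |t| ^ (n + 1) / n ! * j ! * ((2 * ((n : ℝ) + j)) ^ n * 2) := by rw [mul_pow]; ring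
    _ ≤ |t| ^ (n + 1) / n ! * j ! * (A ^ n * (A ^ 2 / ((j : ℝ) + 1) ^ 2)) := by
        gcongr
        rwa [le_div_iff₀ (by positivity)]
    _ = |t| ^ (n + 1) / n ! * ((j + 1 : ℝ) ^ 2)⁻¹ * (j ! * A ^ (n + 1 + 1)) := by ring

lemma summable_abs_ITerm (t ξ : ℝ) {β : ℝ} (hβ : 0 < β) :
    Summable fun p : ℕ × ℕ => |ITerm t β ξ p.1 p.2| := by
  have h_coeff : Summable fun m : ℕ => if m = 0 then β⁻¹ else |t| ^ m / (m - 1)! := by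
    refine (summable_nat_add_iff 1).mp ?_
    simpa [pow_succ, mul_div_assoc, mul_comm] using
      (Real.summable_pow_div_factorial |t|).mul_left |t|
  have h_sq : Summable fun j : ℕ => ((j + 1 : ℝ) ^ 2)⁻¹ := by
    simpa using (summable_nat_add_iff 1).mpr (summable_nat_pow_inv.mpr one_lt_two)
  refine .of_nonneg_of_le (fun _ => abs_nonneg _)
    (fun p => abs_ITerm_le_majorant t ξ hβ p.1 p.2)
    (h_coeff.mul_of_nonneg h_sq (fun m => ?_) (fun j => by positivity))
  dsimp only [Pi.zero_apply]
  split_ifs <;> positivity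

theorem HasSum.sum_antidiagonal {A α : Type*} [AddMonoid A] [Finset.HasAntidiagonal A]
    [AddCommMonoid α] [TopologicalSpace α] [ContinuousAdd α] [RegularSpace α]
    {f : A × A → α} {a : α} (hf : HasSum f a) :
    HasSum (fun n => ∑ p ∈ antidiagonal n, f p) a :=
  (Finset.HasAntidiagonal.sigmaAntidiagonalEquivProd.hasSum_iff.mpr hf).sigma fun n =>
    (antidiagonal n).hasSum f

theorem stmt6_general (t β ξ : ℝ) (hβ : 0 < β) :
    (Summable fun j : ℕ =>
        ∫ x in Set.Ioi (0 : ℝ),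
          Real.sin (x * ξ) * laguerre j (2 * t * x) * Real.exp (-(2 * j + β) * x)) ∧
    (Summable fun p : ℕ × ℕ => |ITerm t β ξ p.1 p.2|) ∧
    (∑' j : ℕ, ∫ x in Set.Ioi (0 : ℝ),
        Real.sin (x * ξ) * laguerre j (2 * t * x) * Real.exp (-(2 * j + β) * x)) =
      ∑' (m : ℕ) (j : ℕ), ITerm t β ξ m j := by
  have h_abs := summable_abs_ITerm t ξ hβ
  have h_sum := h_abs.of_abs.hasSum.sum_antidiagonal
  simp only [← integral_sin_mul_laguerre_mul_exp_neg t ξ hβ] at h_sum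
  exact ⟨h_sum.summable, h_abs, h_sum.tsum_eq.trans h_abs.of_abs.tsum_prod⟩

/-- For `t > 0`, `β > 0` and `ξ ∈ ℝ`, the series of integrals
`∑_{j ≥ 0} ∫_0^∞ sin(xξ) L_j^{(-1)}(2tx) e^{-(2j+β)x} dx` converges and equals the
double series `∑_{m,j} (m)_j (-2t)^m / (j! ((2j+2m+β)² + ξ²)^{(m+1)/2})
· sin((m+1) arctan(ξ/(2j+2m+β)))`, which converges absolutely. -/
theorem stmt6 (t β ξ : ℝ) (ht : 0 < t) (hβ : 0 < β) :
    (Summable fun j : ℕ =>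
        ∫ x in Set.Ioi (0 : ℝ),
          Real.sin (x * ξ) * laguerre j (2 * t * x) * Real.exp (-(2 * j + β) * x)) ∧
    (Summable fun p : ℕ × ℕ => |ITerm t β ξ p.1 p.2|) ∧
    (∑' j : ℕ, ∫ x in Set.Ioi (0 : ℝ),
        Real.sin (x * ξ) * laguerre j (2 * t * x) * Real.exp (-(2 * j + β) * x)) =
      ∑' (m : ℕ) (j : ℕ), ITerm t β ξ m j :=
  stmt6_general t β ξ hβ
end

section
/- For every α > 0 and every t ∈ ℝ, the matrix exponential satisfies exp(t𝒜_α) = I₄ + (sin²(αt)/α) · 𝒜_α 𝒥_α + (sin(αt)cos(αt)/α) · 𝒜_α; in 2×2 block form, exp(t𝒜_α) = [[U_α(t), (1/α)V_α(t)], [−αV_α(t), U_α(t)]], where U_α(t) = cos²(αt) I₂ + sin(αt)cos(αt) A and V_α(t) = sin²(αt) A + sin(αt)cos(αt) I₂. -/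
open Matrix Real

/-- The 2×2 rotation generator `A = [[0, -1], [1, 0]]`. -/
noncomputable def Amat : Matrix (Fin 2) (Fin 2) ℝ := !![0, -1; 1, 0]

/-- The 4×4 matrix `𝒜_α = [[αA, I₂], [-α²I₂, αA]]` in 2×2 block form. -/
noncomputable def Acal (α : ℝ) : Matrix (Fin 2 ⊕ Fin 2) (Fin 2 ⊕ Fin 2) ℝ :=
  Matrix.fromBlocks (α • Amat) 1 (-(α ^ 2) • 1) (α • Amat)

/-- The 4×4 matrix `𝒥_α = [[0₂, (1/α)I₂], [-αI₂, 0₂]]` in 2×2 block form. -/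
noncomputable def Jcal (α : ℝ) : Matrix (Fin 2 ⊕ Fin 2) (Fin 2 ⊕ Fin 2) ℝ :=
  Matrix.fromBlocks 0 (α⁻¹ • 1) ((-α) • 1) 0

/-- `U_α(t) = cos²(αt) I₂ + sin(αt)cos(αt) A`. -/
noncomputable def Umat (α t : ℝ) : Matrix (Fin 2) (Fin 2) ℝ :=
  Real.cos (α * t) ^ 2 • 1 + (Real.sin (α * t) * Real.cos (α * t)) • Amat

/-- `V_α(t) = sin²(αt) A + sin(αt)cos(αt) I₂`. -/
noncomputable def Vmat (α t : ℝ) : Matrix (Fin 2) (Fin 2) ℝ :=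
  Real.sin (α * t) ^ 2 • Amat + (Real.sin (α * t) * Real.cos (α * t)) • 1

/-!
Write `𝒜_α = α (𝒟 + 𝒥_α)` with `𝒟 = diag(A, A)`. Both `𝒟` and `𝒥_α` square to `-1` and they
commute, so `exp(t𝒜_α) = exp(αt 𝒟) exp(αt 𝒥_α)`, and each factor obeys Euler's formula
`exp(θJ) = cos θ + sin θ J` (transport `exp(iθ)` along the ℝ-algebra map `ℂ → 𝔸`, `i ↦ J`).
Expanding `(cos αt + sin αt 𝒟)(cos αt + sin αt 𝒥_α)` gives both expressions.
-/
theorem NormedSpace.exp_smul_of_mul_self_eq_neg_one {𝔸 : Type*} [NormedRing 𝔸]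
    [NormedAlgebra ℝ 𝔸] {J : 𝔸} (hJ : J * J = -1) (θ : ℝ) :
    NormedSpace.exp (θ • J) = cos θ • 1 + sin θ • J := by
  let φ := Complex.liftAux J hJ
  have hφ : Continuous φ := φ.toLinearMap.continuous_of_finiteDimensional
  have hθ : θ • J = φ (θ * Complex.I) := by simp [φ, Complex.liftAux_apply]
  rw [hθ, ← NormedSpace.map_exp_of_mem_ball (𝕂 := ℝ) φ hφ _
    ((NormedSpace.expSeries_radius_eq_top ℝ ℂ).symm ▸ edist_lt_top _ _),
    ← Complex.exp_eq_exp_ℂ, Complex.exp_mul_I]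
  simp [φ, Complex.liftAux_apply, Algebra.algebraMap_eq_smul_one, Complex.cos_ofReal_re,
    Complex.sin_ofReal_re]

theorem Matrix.exp_smul_of_mul_self_eq_neg_one {n : Type*} [Fintype n] [DecidableEq n]
    {J : Matrix n n ℝ} (hJ : J * J = -1) (θ : ℝ) :
    NormedSpace.exp (θ • J) = cos θ • 1 + sin θ • J :=
  open scoped Norms.Operator in NormedSpace.exp_smul_of_mul_self_eq_neg_one hJ θ

theorem Amat_mul_self : Amat * Amat = -1 := by
  ext i j
  fin_cases i <;> fin_cases j <;> simp [Amat]

noncomputable def Dcal : Matrix (Fin 2 ⊕ Fin 2) (Fin 2 ⊕ Fin 2) ℝ :=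
  fromBlocks Amat 0 0 Amat

theorem Dcal_mul_self : Dcal * Dcal = -1 := by
  simp [Dcal, fromBlocks_multiply, Amat_mul_self, ← fromBlocks_one, fromBlocks_neg]

theorem Jcal_mul_self {α : ℝ} (hα : α ≠ 0) : Jcal α * Jcal α = -1 := by
  simp [Jcal, fromBlocks_multiply, smul_smul, hα, ← fromBlocks_one, fromBlocks_neg]

theorem commute_Dcal_Jcal (α : ℝ) : Commute Dcal (Jcal α) := by
  simp [Commute, SemiconjBy, Dcal, Jcal, fromBlocks_multiply]

theorem Acal_eq_smul_add {α : ℝ} (hα : α ≠ 0) : Acal α = α • (Dcal + Jcal α) := by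
  simp [Acal, Dcal, Jcal, fromBlocks_add, fromBlocks_smul, smul_smul, hα, pow_two]

theorem exp_smul_Acal {α : ℝ} (hα : α ≠ 0) (t : ℝ) :
    NormedSpace.exp (t • Acal α) =
      (cos (α * t) • 1 + sin (α * t) • Dcal) * (cos (α * t) • 1 + sin (α * t) • Jcal α) := by
  rw [Acal_eq_smul_add hα, smul_smul, smul_add, mul_comm t,
    Matrix.exp_add_of_commute _ _ ((commute_Dcal_Jcal α).smul_left _ |>.smul_right _),
    Matrix.exp_smul_of_mul_self_eq_neg_one Dcal_mul_self,
    Matrix.exp_smul_of_mul_self_eq_neg_one (Jcal_mul_self hα)]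

theorem exp_smul_Acal_eq_one_add {α : ℝ} (hα : α ≠ 0) (t : ℝ) :
    NormedSpace.exp (t • Acal α) =
      1 + (sin (α * t) ^ 2 / α) • (Acal α * Jcal α) + (sin (α * t) * cos (α * t) / α) • Acal α := by
  have hsc : sin (α * t) ^ 2 + cos (α * t) ^ 2 = 1 := sin_sq_add_cos_sq _
  rw [exp_smul_Acal hα, Acal_eq_smul_add hα]
  simp only [add_mul, mul_add, smul_mul_assoc, mul_smul_comm, one_mul, mul_one, Jcal_mul_self hα,
    (commute_Dcal_Jcal α).eq, smul_add, smul_smul, div_mul_cancel₀ _ hα]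
  linear_combination (norm := module) hsc • (1 : Matrix (Fin 2 ⊕ Fin 2) (Fin 2 ⊕ Fin 2) ℝ)

theorem Umat_eq_smul (α t : ℝ) :
    Umat α t = cos (α * t) • (cos (α * t) • 1 + sin (α * t) • Amat) := by
  rw [Umat]; module

theorem Vmat_eq_smul (α t : ℝ) :
    Vmat α t = sin (α * t) • (cos (α * t) • 1 + sin (α * t) • Amat) := by
  rw [Vmat]; module

theorem exp_smul_Acal_eq_fromBlocks {α : ℝ} (hα : α ≠ 0) (t : ℝ) :
    NormedSpace.exp (t • Acal α) =
      fromBlocks (Umat α t) (α⁻¹ • Vmat α t) ((-α) • Vmat α t) (Umat α t) := by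
  rw [exp_smul_Acal hα, Dcal, Jcal, Umat_eq_smul, Vmat_eq_smul, ← fromBlocks_one]
  simp only [fromBlocks_smul, fromBlocks_add, fromBlocks_multiply, smul_zero, add_zero, zero_add,
    Matrix.mul_smul, Matrix.mul_one, smul_smul]
  congr 1 <;> module

/-- For every `α > 0` and `t ∈ ℝ`,
`exp(t𝒜_α) = I₄ + (sin²(αt)/α) 𝒜_α 𝒥_α + (sin(αt)cos(αt)/α) 𝒜_α`, and in block form
`exp(t𝒜_α) = [[U_α(t), (1/α)V_α(t)], [-αV_α(t), U_α(t)]]`. -/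
theorem stmt18 (α t : ℝ) (hα : 0 < α) :
    NormedSpace.exp (t • Acal α) =
        1 + (Real.sin (α * t) ^ 2 / α) • (Acal α * Jcal α) +
          (Real.sin (α * t) * Real.cos (α * t) / α) • Acal α ∧
    NormedSpace.exp (t • Acal α) =
        Matrix.fromBlocks (Umat α t) (α⁻¹ • Vmat α t) ((-α) • Vmat α t) (Umat α t) :=
  ⟨exp_smul_Acal_eq_one_add hα.ne' t, exp_smul_Acal_eq_fromBlocks hα.ne' t⟩
end
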